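/- Let M, Q, Λ be real with Q ≠ 0 and let λ̄ ∈ (0,1). If r₀ > 0 satisfies P(r₀,λ̄) = 0, then there exists r_I with 0 < r_I < r₀ and P(r_I,1) = 0 (the existence of the critical value r₀ requires the existence of an inner horizon below it). -/
import Mathlib


noncomputable section

/-- The quartic polynomial `P(r,s) = sL/3*r^4 - r^2 + 2sM*r - sQ^2` (case `Q != 0`). -/
def P (M Q Λ s r : ℝ) : ℝ := s * Λ / 3 * r ^ 4 - r ^ 2 + 2 * s * M * r - s * Q ^ 2

/-- First derivative of `P` with respect to `r`. -/
def P' (M Q Λ s r : ℝ) : ℝ := 4 * s * Λ / 3 * r ^ 3 - 2 * r + 2 * s * M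

/-- Second derivative of `P` with respect to `r`. -/
def P'' (M Q Λ s r : ℝ) : ℝ := 4 * s * Λ * r ^ 2 - 2

/-- The existence of a critical value `r₀ > 0` (root of `P(·,λ̄)`) requires the existence
of an inner horizon `r_I < r₀` (root of `P(·,1)`). -/
theorem critical_value_requires_inner_horizon (M Q Λ lam r₀ : ℝ)
    (hQ : Q ≠ 0) (h0 : 0 < lam) (h1 : lam < 1)
    (hr : 0 < r₀) (hroot : P M Q Λ lam r₀ = 0) :
    ∃ rI : ℝ, 0 < rI ∧ rI < r₀ ∧ P M Q Λ 1 rI = 0 := by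
  have hcont : ContinuousOn (fun r => P M Q Λ 1 r) (Set.Icc 0 r₀) := by
    unfold P; fun_prop
  have hneg : P M Q Λ 1 0 < 0 := by
    simp only [P]
    nlinarith [sq_pos_of_ne_zero hQ]
  have hkey : lam * P M Q Λ 1 r₀ = (1 - lam) * r₀ ^ 2 := by
    simp only [P] at hroot ⊢
    nlinarith [hroot]
  have hposP : 0 < P M Q Λ 1 r₀ := by
    have h2 : 0 < (1 - lam) * r₀ ^ 2 := mul_pos (by linarith) (by positivity)
    nlinarith
  have hsub := intermediate_value_Ioo (le_of_lt hr) hcont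
  have h0mem : (0 : ℝ) ∈ Set.Ioo (P M Q Λ 1 0) (P M Q Λ 1 r₀) := ⟨hneg, hposP⟩
  obtain ⟨rI, hrI, hval⟩ := hsub h0mem
  exact ⟨rI, hrI.1, hrI.2, hval⟩
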